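/- arXiv:2007.11405 — 3 statements merged into one kernel-verified Lean document; each statement's English description precedes it below -/
import Mathlib

section
/- There exist a constant C > 0 and an integer K ≥ 7 such that for every integer k ≥ K, T_k^3 is integrable and |E[T_k^3] + 7√2/√k| ≤ C·k^{−3/2}; that is, E[T_k^3] = −7√2/√k + O(k^{−3/2}) as k → ∞. -/
/-!
With `S = ∑_{i<k} Z_i²` one has `T_k = √(k/2) (1 - k/S)`, so `E[T_k³]` is a combination of the
inverse moments `E[S⁻ᵐ]`, `m ≤ 3`. These come from the Laplace transform: integrating
`x⁻⁽ⁿ⁺¹⁾ = (1/n!) ∫₀^∞ tⁿ e^{-tx} dt` against the law of `S` and using Tonelli together with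
`E[e^{-tS}] = (1 + 2t)^{-k/2}` gives `E[S⁻⁽ⁿ⁺¹⁾] = 1 / ((k-2)(k-4)⋯(k-2n-2))`. Hence
`E[T_k³] = -√2 k√k (7k+12) / ((k-2)(k-4)(k-6))` exactly, and this is `-7√2/√k + O(k^{-3/2})`.
-/

open MeasureTheory ProbabilityTheory Real Finset Filter Set Topology
open scoped ENNReal NNReal Nat

lemma mgf_sq_gaussianReal {s : ℝ} (hs : s < 1 / 2) :
    mgf (fun x => x ^ 2) (gaussianReal 0 1) s = (1 - 2 * s) ^ (-(1 / 2) : ℝ) := by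
  have hdensity : ∀ x : ℝ, gaussianPDFReal 0 1 x • rexp (s * x ^ 2)
      = (√(2 * π))⁻¹ * rexp (-(1 / 2 - s) * x ^ 2) := by
    intro x
    rw [smul_eq_mul, gaussianPDFReal, mul_assoc, ← Real.exp_add]
    simp only [NNReal.coe_one, mul_one, sub_zero]
    ring_nf
  rw [mgf, integral_gaussianReal_eq_integral_smul one_ne_zero]
  simp_rw [hdensity]
  have hs' : 0 < 1 - 2 * s := by linarith
  have hconst : (2 * π)⁻¹ * (π / (1 / 2 - s)) = (1 - 2 * s)⁻¹ := by
    field_simp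
  rw [integral_const_mul, integral_gaussian, ← sqrt_inv, ← sqrt_mul (by positivity), hconst,
    sqrt_eq_rpow, inv_rpow hs'.le, rpow_neg hs'.le]

lemma ae_ne_zero_of_map_eq_gaussianReal {Ω : Type*} [MeasurableSpace Ω] {μ : Measure Ω}
    {Y : Ω → ℝ} (hY : AEMeasurable Y μ) {m : ℝ} {v : ℝ≥0} (hv : v ≠ 0)
    (h : μ.map Y = gaussianReal m v) : ∀ᵐ ω ∂μ, Y ω ≠ 0 := by
  have := nullSingletonClass_gaussianReal (μ := m) hv
  rw [ae_iff]
  simp only [ne_eq, not_not]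
  change μ (Y ⁻¹' {0}) = 0
  rw [← Measure.map_apply_of_aemeasurable hY (measurableSet_singleton 0), h, measure_singleton]

lemma mgf_sum_sq_of_iIndepFun_gaussian {Ω : Type*} [MeasurableSpace Ω] {μ : Measure Ω}
    {Z : ℕ → Ω → ℝ} (hmeas : ∀ i, Measurable (Z i))
    (hdist : ∀ i, μ.map (Z i) = gaussianReal 0 1) (hindep : iIndepFun Z μ) (k : ℕ) {s : ℝ}
    (hs : s < 1 / 2) :
    mgf (fun ω => ∑ i ∈ range k, Z i ω ^ 2) μ s = (1 - 2 * s) ^ (-(k / 2 : ℝ)) := by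
  have hsq : iIndepFun (fun i => (fun x : ℝ => x ^ 2) ∘ Z i) μ :=
    hindep.comp (fun _ x => x ^ 2) fun _ => by fun_prop
  have hZ : ∀ i, mgf ((fun x : ℝ => x ^ 2) ∘ Z i) μ s = (1 - 2 * s) ^ (-(1 / 2) : ℝ) := by
    intro i
    rw [← mgf_map (hmeas i).aemeasurable (by fun_prop), hdist i, mgf_sq_gaussianReal hs]
  have h := hsq.mgf_sum (fun i => by fun_prop) (range k) (t := s)
  rw [prod_congr rfl fun i _ => hZ i, prod_const, card_range,
    ← rpow_mul_natCast (by linarith)] at h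
  have hsum : (fun ω => ∑ i ∈ range k, Z i ω ^ 2) = ∑ i ∈ range k, (fun x : ℝ => x ^ 2) ∘ Z i := by
    ext ω
    simp [Finset.sum_apply]
  rw [hsum, h]
  ring_nf

lemma lintegral_Ioi_pow_mul_exp_neg_mul (n : ℕ) {s : ℝ} (hs : 0 < s) :
    ∫⁻ t in Ioi 0, ENNReal.ofReal (t ^ n * rexp (-t * s)) = ENNReal.ofReal (n ! / s ^ (n + 1)) := by
  have hval : ∫ t in Ioi 0, t ^ n * rexp (-t * s) = n ! / s ^ (n + 1) := by
    have := integral_rpow_mul_exp_neg_mul_Ioi (a := n + 1) (by positivity) hs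
    simp_rw [add_sub_cancel_right, rpow_natCast, Gamma_nat_eq_factorial, mul_comm s,
      ← neg_mul] at this
    rw [this, one_div, ← rpow_natCast, inv_rpow hs.le]
    push_cast
    ring
  rw [← hval, ofReal_integral_eq_lintegral_ofReal]
  · exact .of_integral_ne_zero (by rw [hval]; positivity)
  · filter_upwards [ae_restrict_mem measurableSet_Ioi] with t (ht : 0 < t)
    positivity

lemma integrableOn_and_integral_Ioi_one_add_two_mul_rpow_neg {c : ℝ} (hc : 1 < c) :
    IntegrableOn (fun t : ℝ => (1 + 2 * t) ^ (-c)) (Ioi 0) ∧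
      ∫ t in Ioi 0, (1 + 2 * t) ^ (-c) = 1 / (2 * c - 2) := by
  set G : ℝ → ℝ := fun t => -(1 + 2 * t) ^ (1 - c) / (2 * c - 2)
  have hderiv : ∀ t ∈ Ici (0 : ℝ), HasDerivAt G ((1 + 2 * t) ^ (-c)) t := by
    intro t (ht : 0 ≤ t)
    have hu : HasDerivAt (fun t : ℝ => 1 + 2 * t) 2 t := by
      simpa using ((hasDerivAt_id t).const_mul 2).const_add 1
    refine (((hu.rpow_const (p := 1 - c) (Or.inl (by linarith))).neg).div_const
      (2 * c - 2)).congr_deriv ?_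
    have : c - 1 ≠ 0 := by linarith
    rw [sub_sub_cancel_left]
    field_simp
    ring
  have hnonneg : ∀ t ∈ Ioi (0 : ℝ), 0 ≤ (1 + 2 * t) ^ (-c) := fun t (ht : 0 < t) =>
    rpow_nonneg (by linarith) _
  have hlim : Tendsto G atTop (𝓝 0) := by
    have hu : Tendsto (fun t : ℝ => 1 + 2 * t) atTop atTop :=
      tendsto_atTop_add_const_left _ _ (tendsto_id.const_mul_atTop two_pos)
    have := ((tendsto_rpow_neg_atTop (y := c - 1) (by linarith)).comp hu).neg.div_const
      (2 * c - 2)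
    simpa [G, neg_sub] using this
  refine ⟨integrableOn_Ioi_deriv_of_nonneg' hderiv hnonneg hlim, ?_⟩
  rw [integral_Ioi_of_hasDerivAt_of_nonneg' hderiv hnonneg hlim]
  simp [G, neg_div]

lemma prod_two_mul_sub_pos (n : ℕ) {c : ℝ} (hc : n + 1 < c) :
    0 < ∏ j ∈ range (n + 1), (2 * c - 2 * (j + 1)) := by
  refine prod_pos fun j hj => ?_
  have : (j : ℝ) + 1 ≤ n + 1 := by exact_mod_cast (mem_range.mp hj)
  linarith

lemma integrableOn_and_integral_Ioi_pow_mul_one_add_two_mul_rpow_neg (n : ℕ) {c : ℝ}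
    (hc : n + 1 < c) :
    IntegrableOn (fun t : ℝ => t ^ n * (1 + 2 * t) ^ (-c)) (Ioi 0) ∧
      ∫ t in Ioi 0, t ^ n * (1 + 2 * t) ^ (-c)
        = n ! / ∏ j ∈ range (n + 1), (2 * c - 2 * (j + 1)) := by
  induction n generalizing c with
  | zero => simpa using integrableOn_and_integral_Ioi_one_add_two_mul_rpow_neg (by simpa using hc)
  | succ n ih =>
    push_cast at hc
    obtain ⟨hint₁, hval₁⟩ := ih (c := c - 1) (by linarith)
    obtain ⟨hint₀, hval₀⟩ := ih (c := c) (by linarith)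
    -- `t = ((1 + 2t) - 1) / 2` lowers the power of `t` by one
    have hsplit : EqOn (fun t : ℝ => t ^ (n + 1) * (1 + 2 * t) ^ (-c))
        (fun t => (t ^ n * (1 + 2 * t) ^ (-(c - 1)) - t ^ n * (1 + 2 * t) ^ (-c)) / 2)
        (Ioi 0) := by
      intro t (ht : 0 < t)
      simp only
      rw [show -(c - 1) = -c + 1 by ring, rpow_add_one (by linarith)]
      ring
    refine ⟨IntegrableOn.congr_fun ((hint₁.sub hint₀).div_const 2) hsplit.symm
      measurableSet_Ioi, ?_⟩
    rw [setIntegral_congr_fun measurableSet_Ioi hsplit, integral_div,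
      integral_sub hint₁ hint₀, hval₁, hval₀]
    have hP₀ := prod_two_mul_sub_pos n (c := c) (by linarith)
    have hP₁ := prod_two_mul_sub_pos n (c := c - 1) (by linarith)
    have hlast : ∏ j ∈ range (n + 2), (2 * c - 2 * ((j : ℝ) + 1))
        = (∏ j ∈ range (n + 1), (2 * c - 2 * (j + 1))) * (2 * c - 2 * (n + 2)) := by
      rw [prod_range_succ]; push_cast; ring
    have hfirst : ∏ j ∈ range (n + 2), (2 * c - 2 * ((j : ℝ) + 1))
        = (∏ j ∈ range (n + 1), (2 * (c - 1) - 2 * (j + 1))) * (2 * c - 2) := by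
      rw [prod_range_succ']
      push_cast
      congr 1
      · exact prod_congr rfl fun j _ => by ring
      · ring
    have hP := prod_two_mul_sub_pos (n + 1) (c := c) (by push_cast; linarith)
    have e₁ : n ! / (∏ j ∈ range (n + 1), (2 * (c - 1) - 2 * (j + 1)))
        * ∏ j ∈ range (n + 2), (2 * c - 2 * ((j : ℝ) + 1)) = n ! * (2 * c - 2) := by
      rw [hfirst, ← mul_assoc, div_mul_cancel₀ _ hP₁.ne']
    have e₀ : n ! / (∏ j ∈ range (n + 1), (2 * c - 2 * (j + 1)))
        * ∏ j ∈ range (n + 2), (2 * c - 2 * ((j : ℝ) + 1)) = n ! * (2 * c - 2 * (n + 2)) := by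
      rw [hlast, ← mul_assoc, div_mul_cancel₀ _ hP₀.ne']
    rw [eq_div_iff hP.ne', Nat.factorial_succ]
    push_cast
    linear_combination (e₁ - e₀) / 2

lemma studentized_cube_eq {k S : ℝ} (hk : 0 < k) (hS : 0 < S) :
    (√k * (1 / k * S - 1) / (√2 * (1 / k * S))) ^ 3
      = k * √k / (2 * √2) * (1 - 3 * k * S⁻¹ + 3 * k ^ 2 * S⁻¹ ^ 2 - k ^ 3 * S⁻¹ ^ 3) := by
  field_simp
  rw [sq_sqrt zero_le_two, sq_sqrt hk.le]
  ring

section InverseMoments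

variable {Ω : Type*} [MeasurableSpace Ω] {μ : Measure Ω} {X : Ω → ℝ}

lemma ofReal_mgf_neg_eq_lintegral_exp [IsFiniteMeasure μ] (hX : AEMeasurable X μ)
    (hnonneg : ∀ᵐ ω ∂μ, 0 ≤ X ω) {t : ℝ} (ht : 0 ≤ t) :
    ENNReal.ofReal (mgf X μ (-t)) = ∫⁻ ω, ENNReal.ofReal (rexp (-t * X ω)) ∂μ := by
  refine ofReal_integral_eq_lintegral_ofReal ?_ (ae_of_all _ fun ω => (exp_pos _).le)
  refine (integrable_const (1 : ℝ)).mono' (by fun_prop) ?_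
  filter_upwards [hnonneg] with ω hω
  rw [norm_of_nonneg (exp_pos _).le, exp_le_one_iff]
  nlinarith

lemma factorial_mul_lintegral_inv_pow_succ [IsFiniteMeasure μ] (hX : Measurable X)
    (hpos : ∀ᵐ ω ∂μ, 0 < X ω) (n : ℕ) :
    n ! * ∫⁻ ω, ENNReal.ofReal ((X ω)⁻¹ ^ (n + 1)) ∂μ
      = ∫⁻ t in Ioi 0, ENNReal.ofReal (t ^ n * mgf X μ (-t)) := by
  have hF : Measurable fun p : Ω × ℝ => ENNReal.ofReal (p.2 ^ n * rexp (-p.2 * X p.1)) := by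
    fun_prop
  calc n ! * ∫⁻ ω, ENNReal.ofReal ((X ω)⁻¹ ^ (n + 1)) ∂μ
      = ∫⁻ ω, (∫⁻ t in Ioi 0, ENNReal.ofReal (t ^ n * rexp (-t * X ω))) ∂μ := by
        rw [← lintegral_const_mul' _ _ (ENNReal.natCast_ne_top _)]
        refine lintegral_congr_ae ?_
        filter_upwards [hpos] with ω hω
        rw [lintegral_Ioi_pow_mul_exp_neg_mul n hω, div_eq_mul_inv, ← inv_pow,
          ENNReal.ofReal_mul (by positivity), ENNReal.ofReal_natCast]
    _ = ∫⁻ t in Ioi 0, (∫⁻ ω, ENNReal.ofReal (t ^ n * rexp (-t * X ω)) ∂μ) :=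
        lintegral_lintegral_swap hF.aemeasurable
    _ = ∫⁻ t in Ioi 0, ENNReal.ofReal (t ^ n * mgf X μ (-t)) := by
        refine setLIntegral_congr_fun measurableSet_Ioi fun t (ht : 0 < t) => ?_
        simp_rw [ENNReal.ofReal_mul (pow_pos ht n).le]
        rw [lintegral_const_mul _ (by fun_prop),
          ofReal_mgf_neg_eq_lintegral_exp hX.aemeasurable (hpos.mono fun _ h => h.le) ht.le]

lemma integrable_inv_pow_succ_and_integral_eq [IsFiniteMeasure μ] (hX : Measurable X)
    (hpos : ∀ᵐ ω ∂μ, 0 < X ω) (n : ℕ)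
    (hint : IntegrableOn (fun t => t ^ n * mgf X μ (-t)) (Ioi 0)) :
    Integrable (fun ω => (X ω)⁻¹ ^ (n + 1)) μ ∧
      ∫ ω, (X ω)⁻¹ ^ (n + 1) ∂μ = (∫ t in Ioi 0, t ^ n * mgf X μ (-t)) / n ! := by
  have hnonneg : 0 ≤ᵐ[μ] fun ω => (X ω)⁻¹ ^ (n + 1) := by
    filter_upwards [hpos] with ω hω using by positivity
  have hmeas : AEStronglyMeasurable (fun ω => (X ω)⁻¹ ^ (n + 1)) μ := by fun_prop
  have hI : 0 ≤ᵐ[volume.restrict (Ioi 0)] fun t : ℝ => t ^ n * mgf X μ (-t) := by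
    filter_upwards [ae_restrict_mem measurableSet_Ioi] with t (ht : 0 < t)
    exact mul_nonneg (pow_pos ht n).le mgf_nonneg
  have hlin : ∫⁻ ω, ENNReal.ofReal ((X ω)⁻¹ ^ (n + 1)) ∂μ
      = ENNReal.ofReal ((∫ t in Ioi 0, t ^ n * mgf X μ (-t)) / n !) := by
    rw [ENNReal.ofReal_div_of_pos (by positivity), ENNReal.ofReal_natCast,
      ENNReal.eq_div_iff (by positivity) (ENNReal.natCast_ne_top _),
      ofReal_integral_eq_lintegral_ofReal hint hI, factorial_mul_lintegral_inv_pow_succ hX hpos]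
  refine ⟨⟨hmeas, ?_⟩, ?_⟩
  · rw [hasFiniteIntegral_iff_ofReal hnonneg, hlin]
    exact ENNReal.ofReal_lt_top
  · rw [integral_eq_lintegral_of_nonneg_ae hnonneg hmeas, hlin, ENNReal.toReal_ofReal]
    exact div_nonneg (integral_nonneg_of_ae hI) (Nat.cast_nonneg _)

lemma integrable_inv_pow_succ_and_integral_eq_of_mgf [IsFiniteMeasure μ] (hX : Measurable X)
    (hpos : ∀ᵐ ω ∂μ, 0 < X ω) {c : ℝ} (hmgf : ∀ t, 0 < t → mgf X μ (-t) = (1 + 2 * t) ^ (-c))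
    (n : ℕ) (hc : n + 1 < c) :
    Integrable (fun ω => (X ω)⁻¹ ^ (n + 1)) μ ∧
      ∫ ω, (X ω)⁻¹ ^ (n + 1) ∂μ = 1 / ∏ j ∈ range (n + 1), (2 * c - 2 * (j + 1)) := by
  have hEq : EqOn (fun t => t ^ n * mgf X μ (-t)) (fun t => t ^ n * (1 + 2 * t) ^ (-c)) (Ioi 0) :=
    fun t ht => by simp only [hmgf t ht]
  obtain ⟨hint, hval⟩ := integrableOn_and_integral_Ioi_pow_mul_one_add_two_mul_rpow_neg n hc
  obtain ⟨hXint, hXval⟩ := integrable_inv_pow_succ_and_integral_eq hX hpos n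
    (hint.congr_fun hEq.symm measurableSet_Ioi)
  refine ⟨hXint, ?_⟩
  rw [hXval, setIntegral_congr_fun measurableSet_Ioi hEq, hval,
    div_div_cancel_left' (by positivity), one_div]

lemma integrable_and_integral_studentized_cube [IsProbabilityMeasure μ] (hX : Measurable X)
    (hpos : ∀ᵐ ω ∂μ, 0 < X ω)
    {k : ℝ} (hk : 6 < k) (hmgf : ∀ t, 0 < t → mgf X μ (-t) = (1 + 2 * t) ^ (-(k / 2))) :
    Integrable (fun ω => (√k * (1 / k * X ω - 1) / (√2 * (1 / k * X ω))) ^ 3) μ ∧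
      ∫ ω, (√k * (1 / k * X ω - 1) / (√2 * (1 / k * X ω))) ^ 3 ∂μ
        = -(√2 * k * √k * (7 * k + 12)) / ((k - 2) * (k - 4) * (k - 6)) := by
  have hmoment (n : ℕ) (hn : (n : ℝ) ≤ 2) :=
    integrable_inv_pow_succ_and_integral_eq_of_mgf hX hpos hmgf n (by linarith)
  have hint₁ : Integrable (fun ω => (X ω)⁻¹) μ := by simpa using (hmoment 0 (by norm_num)).1
  have hint₂ : Integrable (fun ω => (X ω)⁻¹ ^ 2) μ := (hmoment 1 (by norm_num)).1
  have hint₃ : Integrable (fun ω => (X ω)⁻¹ ^ 3) μ := (hmoment 2 (by norm_num)).1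
  have hval₁ : ∫ ω, (X ω)⁻¹ ∂μ = 1 / (k - 2) := by
    simpa using (hmoment 0 (by norm_num)).2.trans (by norm_num; ring_nf)
  have hval₂ : ∫ ω, (X ω)⁻¹ ^ 2 ∂μ = 1 / ((k - 2) * (k - 4)) :=
    (hmoment 1 (by norm_num)).2.trans (by norm_num [prod_range_succ]; ring_nf)
  have hval₃ : ∫ ω, (X ω)⁻¹ ^ 3 ∂μ = 1 / ((k - 2) * (k - 4) * (k - 6)) :=
    (hmoment 2 (by norm_num)).2.trans (by norm_num [prod_range_succ]; ring_nf)
  have hcube : (fun ω => (√k * (1 / k * X ω - 1) / (√2 * (1 / k * X ω))) ^ 3) =ᵐ[μ]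
      fun ω => k * √k / (2 * √2) *
        (1 - 3 * k * (X ω)⁻¹ + 3 * k ^ 2 * (X ω)⁻¹ ^ 2 - k ^ 3 * (X ω)⁻¹ ^ 3) := by
    filter_upwards [hpos] with ω hω using studentized_cube_eq (by linarith) hω
  have hint₀₁ : Integrable (fun ω => 1 - 3 * k * (X ω)⁻¹) μ :=
    (integrable_const 1).sub (hint₁.const_mul _)
  have hint₀₂ : Integrable (fun ω => 1 - 3 * k * (X ω)⁻¹ + 3 * k ^ 2 * (X ω)⁻¹ ^ 2) μ :=
    hint₀₁.add (hint₂.const_mul _)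
  refine ⟨((hint₀₂.sub (hint₃.const_mul (k ^ 3))).const_mul _).congr hcube.symm, ?_⟩
  rw [integral_congr_ae hcube, integral_const_mul, integral_sub hint₀₂ (hint₃.const_mul _),
    integral_add hint₀₁ (hint₂.const_mul _), integral_sub (integrable_const 1) (hint₁.const_mul _),
    integral_const, integral_const_mul, integral_const_mul, integral_const_mul, hval₁, hval₂,
    hval₃, probReal_univ, smul_eq_mul, mul_one]
  have h2 : √2 ^ 2 = 2 := sq_sqrt zero_le_two
  have : k - 2 ≠ 0 := by linarith
  have : k - 4 ≠ 0 := by linarith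
  have : k - 6 ≠ 0 := by linarith
  field_simp
  rw [h2]
  ring

end InverseMoments

lemma abs_studentized_third_moment_error_le {k : ℝ} (hk : 12 ≤ k) :
    |-(√2 * k * √k * (7 * k + 12)) / ((k - 2) * (k - 4) * (k - 6)) + 7 * √2 / √k|
      ≤ 1152 * k ^ (-(3 : ℝ) / 2) := by
  have hsk : 0 < √k := sqrt_pos.mpr (by linarith)
  have hD : (k / 2) ^ 3 ≤ (k - 2) * (k - 4) * (k - 6) := by
    calc (k / 2) ^ 3 = k / 2 * (k / 2) * (k / 2) := by ring
      _ ≤ (k - 2) * (k - 4) * (k - 6) := by gcongr <;> nlinarith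
  have hD₀ : 0 < (k - 2) * (k - 4) * (k - 6) := lt_of_lt_of_le (by positivity) hD
  have hq : 0 < 96 * k ^ 2 - 308 * k + 336 := by nlinarith
  have hsum : -(√2 * k * √k * (7 * k + 12)) / ((k - 2) * (k - 4) * (k - 6)) + 7 * √2 / √k
      = -(√2 * (96 * k ^ 2 - 308 * k + 336) / (√k * ((k - 2) * (k - 4) * (k - 6)))) := by
    have : k - 2 ≠ 0 := by linarith
    have : k - 4 ≠ 0 := by linarith
    have : k - 6 ≠ 0 := by linarith
    field_simp
    rw [sq_sqrt (by linarith)]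
    ring
  have hpow : k ^ (-(3 : ℝ) / 2) = 1 / (k * √k) := by
    rw [neg_div, rpow_neg (by linarith), one_div, show (3 : ℝ) / 2 = 1 + 1 / 2 by norm_num,
      rpow_add (by linarith), rpow_one, sqrt_eq_rpow]
  have hs2 : √2 ≤ 3 / 2 := by nlinarith [sq_sqrt (zero_le_two : (0 : ℝ) ≤ 2), sqrt_nonneg 2]
  rw [hsum, abs_neg, abs_of_pos (by positivity), hpow, mul_one_div,
    div_le_div_iff₀ (by positivity) (by positivity)]
  calc √2 * (96 * k ^ 2 - 308 * k + 336) * (k * √k)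
      ≤ 3 / 2 * (96 * k ^ 2) * (k * √k) := by gcongr; nlinarith
    _ = 1152 * (k / 2) ^ 3 * √k := by ring
    _ ≤ 1152 * ((k - 2) * (k - 4) * (k - 6)) * √k := by gcongr
    _ = 1152 * (√k * ((k - 2) * (k - 4) * (k - 6))) := by ring

/-- For the studentized statistic `T_k = √k (V_k − 1)/(√2 V_k)`: there exist
`C > 0` and an integer `K ≥ 7` such that for every `k ≥ K`, `T_k³` is integrable and
`|E[T_k³] + 7√2/√k| ≤ C·k^{−3/2}`; i.e. `E[T_k³] = −7√2/√k + O(k^{−3/2})`. -/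
theorem third_moment_of_studentized_statistic
    {Ω : Type*} [MeasurableSpace Ω] (μ : Measure Ω) [IsProbabilityMeasure μ]
    (Z : ℕ → Ω → ℝ)
    (hmeas : ∀ i, Measurable (Z i))
    (hdist : ∀ i, Measure.map (Z i) μ = gaussianReal 0 1)
    (hindep : iIndepFun Z μ)
    (V T : ℕ → Ω → ℝ)
    (hV : ∀ k, V k = fun ω => (1 / (k : ℝ)) * ∑ i ∈ Finset.range k, (Z i ω) ^ 2)
    (hT : ∀ k, T k = fun ω => Real.sqrt k * (V k ω - 1) / (Real.sqrt 2 * V k ω)) :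
    ∃ C > (0 : ℝ), ∃ K : ℕ, 7 ≤ K ∧ ∀ k : ℕ, K ≤ k →
      Integrable (fun ω => (T k ω) ^ 3) μ ∧
      |∫ ω, (T k ω) ^ 3 ∂μ + 7 * Real.sqrt 2 / Real.sqrt k| ≤ C * (k : ℝ) ^ (-(3 : ℝ) / 2) := by
  refine ⟨1152, by norm_num, 12, by norm_num, fun k hk => ?_⟩
  have hk' : (12 : ℝ) ≤ k := by exact_mod_cast hk
  set S : Ω → ℝ := fun ω => ∑ i ∈ range k, Z i ω ^ 2
  have hpos : ∀ᵐ ω ∂μ, 0 < S ω := by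
    filter_upwards [ae_ne_zero_of_map_eq_gaussianReal (hmeas 0).aemeasurable one_ne_zero
      (hdist 0)] with ω hω
    exact (by positivity : 0 < Z 0 ω ^ 2).trans_le
      (single_le_sum (fun i _ => sq_nonneg (Z i ω)) (mem_range.mpr (by omega)))
  have hmgf (t : ℝ) (ht : 0 < t) : mgf S μ (-t) = (1 + 2 * t) ^ (-(k / 2 : ℝ)) := by
    rw [mgf_sum_sq_of_iIndepFun_gaussian hmeas hdist hindep k (by linarith), mul_neg,
      sub_neg_eq_add]
  obtain ⟨hint, hval⟩ := integrable_and_integral_studentized_cube (by fun_prop) hpos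
    (by linarith) hmgf
  have hTS : (fun ω => T k ω ^ 3)
      = fun ω => (√k * (1 / k * S ω - 1) / (√2 * (1 / k * S ω))) ^ 3 := by
    simp only [hT, hV, S]
  rw [hTS, hval]
  exact ⟨hint, abs_studentized_third_moment_error_le hk'⟩
end

section
/- The second cumulant (variance) of T_k satisfies: there exist a constant C > 0 and an integer K such that for all k ≥ K, |E[T_k^2] − (E[T_k])^2 − 1 − 8/k| ≤ C·k^{−3/2}; that is, Var(T_k) = 1 + 8/k + O(k^{−3/2}) as k → ∞. -/
/-!
With `S = ∑_{i<k} Z_i²` one has `T_k = √(k/2) (1 - k/S)`, so `Var T_k = (k³/2) Var(1/S)`, and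
everything reduces to the negative moments of `S`. Gaussian integration by parts in the
coordinate `Z_i`, conditionally on the independent remainder `∑_{j≠i} Z_j²`, gives
`E[Z_i²/S^(n+1)] = E[S^-(n+1)] - 2(n+1) E[Z_i²/S^(n+2)]`; summing over `i` yields
`(k - 2(n+1)) E[S^-(n+1)] = E[S^-n]`. Hence `E[1/S] = 1/(k-2)`, `E[1/S²] = 1/((k-2)(k-4))` and
`Var T_k = k³/((k-2)²(k-4)) = 1 + 8/k + O(k⁻²)`. The negative moments are finite for `2n < k`
because, by AM-GM, `S^-n` is dominated by the product of the independent factors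
`|Z_i|^(-2n/k)`, each of which is integrable.
-/

open MeasureTheory ProbabilityTheory Real Finset
open scoped NNReal

lemma integrable_abs_rpow_mul_exp_neg_mul_sq {b s : ℝ} (hb : 0 < b) (hs : -1 < s) :
    Integrable fun x : ℝ => |x| ^ s * exp (-b * x ^ 2) := by
  have h := integrable_rpow_mul_exp_neg_mul_sq hb hs
  refine (h.norm.add h.comp_neg.norm).mono' (by fun_prop) (ae_of_all _ fun x => ?_)
  rw [Real.norm_of_nonneg (by positivity)]
  rcases le_total 0 x with hx | hx
  · rw [abs_of_nonneg hx]
    exact le_add_of_le_of_nonneg (le_abs_self _) (norm_nonneg _)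
  · rw [abs_of_nonpos hx, ← neg_sq x]
    exact le_add_of_nonneg_of_le (norm_nonneg _) (le_abs_self _)

section Gaussian

variable {m : ℝ} {v : ℝ≥0}

lemma integrable_gaussianReal_iff (hv : v ≠ 0) {f : ℝ → ℝ} :
    Integrable f (gaussianReal m v) ↔ Integrable fun x => gaussianPDFReal m v x * f x := by
  rw [gaussianReal_of_var_ne_zero _ hv, integrable_withDensity_iff_integrable_smul'
    (measurable_gaussianPDF _ _) (ae_of_all _ fun _ => gaussianPDF_lt_top)]
  simp only [toReal_gaussianPDF, smul_eq_mul]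

lemma integrable_abs_rpow_gaussianReal {s : ℝ} (hs : -1 < s) :
    Integrable (fun x => |x| ^ s) (gaussianReal 0 1) := by
  rw [integrable_gaussianReal_iff one_ne_zero]
  refine ((integrable_abs_rpow_mul_exp_neg_mul_sq (b := 1 / 2) (by norm_num) hs).const_mul
    (√(2 * π))⁻¹).congr (ae_of_all _ fun x => ?_)
  simp only [gaussianPDFReal_def, NNReal.coe_one, mul_one, sub_zero]
  ring_nf

lemma ae_ne_of_map_eq_gaussianReal {Ω : Type*} [MeasurableSpace Ω] {μ : Measure Ω}
    {X : Ω → ℝ} (hv : v ≠ 0) (hX : AEMeasurable X μ) (hlaw : μ.map X = gaussianReal m v)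
    (a : ℝ) : ∀ᵐ ω ∂μ, X ω ≠ a := by
  have := nullSingletonClass_gaussianReal (μ := m) hv
  exact ae_of_ae_map hX (by rw [hlaw]; exact Measure.ae_ne _ a)

lemma hasDerivAt_gaussianPDFReal (x : ℝ) :
    HasDerivAt (gaussianPDFReal m v) (-(x - m) / v * gaussianPDFReal m v x) x := by
  have hsq : HasDerivAt (fun x => (x - m) ^ 2) (2 * (x - m)) x := by
    simpa using ((hasDerivAt_id x).sub_const m).fun_pow 2
  have h : HasDerivAt (fun x => -(x - m) ^ 2 / (2 * v)) (-(x - m) / v) x := by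
    refine hsq.neg.div_const (2 * (v : ℝ)) |>.congr_deriv ?_
    rcases eq_or_ne (v : ℝ) 0 with hv | hv
    · simp [hv]
    · field_simp
  simp only [gaussianPDFReal_def]
  exact (h.exp.const_mul _).congr_deriv (by ring)

theorem integral_sub_mul_eq_integral_deriv_gaussianReal {f f' : ℝ → ℝ}
    (hf : ∀ x, HasDerivAt f (f' x) x) (hbdd : ∃ C, ∀ x, |f x| ≤ C)
    (hf' : Integrable f' (gaussianReal m v)) :
    ∫ x, (x - m) * f x ∂gaussianReal m v = v * ∫ x, f' x ∂gaussianReal m v := by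
  rcases eq_or_ne v 0 with rfl | hv
  · simp [gaussianReal_zero_var]
  obtain ⟨C, hC⟩ := hbdd
  set φ := gaussianPDFReal m v
  have hid : Integrable (fun x => x - m) (gaussianReal m v) :=
    ((memLp_id_gaussianReal 1).integrable le_rfl).sub (integrable_const m)
  have hmul : Integrable (fun x => (x - m) * f x) (gaussianReal m v) :=
    hid.mul_bdd (continuous_iff_continuousAt.2 fun x => (hf x).continuousAt).aestronglyMeasurable
      (ae_of_all _ fun x => (Real.norm_eq_abs _).trans_le (hC x))
  rw [integrable_gaussianReal_iff hv] at hf' hmul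
  have hφf : Integrable fun x => φ x * f x :=
    (integrable_gaussianPDFReal m v).mul_bdd
      (continuous_iff_continuousAt.2 fun x => (hf x).continuousAt).aestronglyMeasurable
      (ae_of_all _ fun x => (Real.norm_eq_abs _).trans_le (hC x))
  have hFTC := integral_eq_zero_of_hasDerivAt_of_integrable
    (fun x => (hasDerivAt_gaussianPDFReal x).mul (hf x))
    ((hmul.div_const v |>.neg.add hf').congr (ae_of_all _ fun x => by
      simp only [Pi.add_apply, Pi.neg_apply]
      ring)) hφf
  have hsplit : ∫ x, φ x * ((x - m) * f x) = v * ∫ x, φ x * f' x := by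
    have hv' : (v : ℝ) ≠ 0 := by exact_mod_cast hv
    rw [integral_congr_ae (g := fun x => -(v : ℝ)⁻¹ * (φ x * ((x - m) * f x)) + φ x * f' x)
      (ae_of_all _ fun x => by ring), integral_add (hmul.const_mul _) hf',
      integral_const_mul] at hFTC
    field_simp at hFTC ⊢
    linarith
  rw [integral_gaussianReal_eq_integral_smul hv, integral_gaussianReal_eq_integral_smul hv]
  exact hsplit

theorem integral_sub_mul_comp_eq_integral_deriv_of_indepFun
    {Ω E : Type*} [MeasurableSpace Ω] [MeasurableSpace E] {μ : Measure Ω}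
    [IsProbabilityMeasure μ] {X : Ω → ℝ} {Y : Ω → E} (hX : Measurable X)
    (hY : Measurable Y) (hXlaw : μ.map X = gaussianReal m v) (hXY : IndepFun Y X μ)
    {f f' : E → ℝ → ℝ}
    (hfm : Measurable (Function.uncurry f)) (hf'm : Measurable (Function.uncurry f'))
    (hderiv : ∀ᵐ y ∂μ.map Y, ∀ x, HasDerivAt (f y) (f' y x) x)
    (hbdd : ∀ᵐ y ∂μ.map Y, ∃ C, ∀ x, |f y x| ≤ C)
    (hint : Integrable (fun ω => (X ω - m) * f (Y ω) (X ω)) μ)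
    (hint' : Integrable (fun ω => f' (Y ω) (X ω)) μ) :
    ∫ ω, (X ω - m) * f (Y ω) (X ω) ∂μ = v * ∫ ω, f' (Y ω) (X ω) ∂μ := by
  have hpair : μ.map (fun ω => (Y ω, X ω)) = (μ.map Y).prod (gaussianReal m v) := by
    rw [← hXlaw]
    exact (indepFun_iff_map_prod_eq_prod_map_map hY.aemeasurable hX.aemeasurable).1 hXY
  have hYX : AEMeasurable (fun ω => (Y ω, X ω)) μ := (hY.prodMk hX).aemeasurable
  have fubini : ∀ F : E × ℝ → ℝ, Measurable F →
      Integrable (fun ω => F (Y ω, X ω)) μ →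
      Integrable F ((μ.map Y).prod (gaussianReal m v)) ∧
      ∫ ω, F (Y ω, X ω) ∂μ = ∫ y, ∫ x, F (y, x) ∂gaussianReal m v ∂μ.map Y := by
    intro F hF hFint
    have hFprod : Integrable F ((μ.map Y).prod (gaussianReal m v)) := by
      rw [← hpair]
      exact (integrable_map_measure hF.aestronglyMeasurable hYX).2 hFint
    refine ⟨hFprod, ?_⟩
    rw [← integral_prod F hFprod, ← hpair, integral_map hYX hF.aestronglyMeasurable]
  obtain ⟨-, hlhs⟩ := fubini (fun p => (p.2 - m) * f p.1 p.2) (by fun_prop) hint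
  obtain ⟨hf'prod, hrhs⟩ := fubini (fun p => f' p.1 p.2) hf'm hint'
  rw [hlhs, hrhs, ← integral_const_mul]
  refine integral_congr_ae ?_
  filter_upwards [hderiv, hbdd, hf'prod.prod_right_ae] with y hy hyC hy'
  exact integral_sub_mul_eq_integral_deriv_gaussianReal hy hyC hy'

end Gaussian

lemma hasDerivAt_div_sq_add_pow (c : ℝ) (n : ℕ) {w : ℝ} (hw : w ^ 2 + c ≠ 0) :
    HasDerivAt (fun w => w / (w ^ 2 + c) ^ n)
      (1 / (w ^ 2 + c) ^ n - 2 * n * w ^ 2 / (w ^ 2 + c) ^ (n + 1)) w := by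
  have hden : HasDerivAt (fun w => (w ^ 2 + c) ^ n) (n * (w ^ 2 + c) ^ (n - 1) * (2 * w)) w := by
    simpa using ((hasDerivAt_pow 2 w).add_const c).fun_pow n
  refine ((hasDerivAt_id w).div hden (pow_ne_zero n hw)).congr_deriv ?_
  rcases n with _ | n
  · simp
  · simp only [id, Nat.add_sub_cancel]
    field_simp
    push_cast
    ring

lemma abs_div_sq_add_pow_succ_le {c : ℝ} (hc : 0 < c) (n : ℕ) (w : ℝ) :
    |w / (w ^ 2 + c) ^ (n + 1)| ≤ 1 / (2 * √c * c ^ n) := by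
  have hpos : 0 < w ^ 2 + c := by positivity
  have amgm : 2 * √c * |w| ≤ w ^ 2 + c := by
    nlinarith [sq_nonneg (|w| - √c), sq_sqrt hc.le, sq_abs w]
  have hpow : c ^ n ≤ (w ^ 2 + c) ^ n := pow_le_pow_left₀ hc.le (by linarith [sq_nonneg w]) n
  rw [abs_div, abs_of_pos (pow_pos hpos _), div_le_div_iff₀ (pow_pos hpos _) (by positivity),
    one_mul, pow_succ]
  calc |w| * (2 * √c * c ^ n) = c ^ n * (2 * √c * |w|) := by ring
    _ ≤ (w ^ 2 + c) ^ n * (w ^ 2 + c) := by gcongr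

lemma sq_div_pow_succ_le_inv_pow {x S : ℝ} (h : x ^ 2 ≤ S) (n : ℕ) :
    x ^ 2 / S ^ (n + 1) ≤ (S ^ n)⁻¹ := by
  rcases ((sq_nonneg x).trans h).eq_or_lt with rfl | hS
  · simp
  rw [div_le_iff₀ (by positivity), pow_succ S n, ← mul_assoc, inv_mul_cancel₀ (by positivity),
    one_mul]
  exact h

lemma inv_pow_sum_sq_le_prod_abs_rpow {ι : Type*} {s : Finset ι} {x : ι → ℝ}
    (hx : ∀ i ∈ s, x i ≠ 0) (n : ℕ) :
    ((∑ i ∈ s, x i ^ 2) ^ n)⁻¹ ≤ ∏ i ∈ s, |x i| ^ (-(2 * n : ℝ) / #s) := by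
  rcases s.eq_empty_or_nonempty with rfl | hs
  · rcases n with _ | n <;> simp
  have hcard : (0 : ℝ) < #s := by exact_mod_cast hs.card_pos
  set G := ∏ i ∈ s, (x i ^ 2) ^ ((1 : ℝ) / #s)
  have hG : 0 < G := prod_pos fun i hi => by have := hx i hi; positivity
  have amgm : G ≤ ∑ i ∈ s, x i ^ 2 := by
    calc G ≤ ∑ i ∈ s, 1 / #s * x i ^ 2 :=
          geom_mean_le_arith_mean_weighted s _ _ (fun _ _ => by positivity)
            (by rw [sum_const, nsmul_eq_mul]; field_simp) (fun _ _ => sq_nonneg _)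
      _ = 1 / #s * ∑ i ∈ s, x i ^ 2 := by rw [mul_sum]
      _ ≤ ∑ i ∈ s, x i ^ 2 := by
          refine mul_le_of_le_one_left (sum_nonneg fun _ _ => sq_nonneg _) ?_
          rw [div_le_one hcard]
          exact_mod_cast hs.card_pos
  calc ((∑ i ∈ s, x i ^ 2) ^ n)⁻¹ ≤ (G ^ n)⁻¹ := by gcongr
    _ = ∏ i ∈ s, |x i| ^ (-(2 * n : ℝ) / #s) := by
      rw [← prod_pow, ← prod_inv_distrib]
      refine prod_congr rfl fun i _ => ?_
      rw [← sq_abs, ← rpow_natCast, ← rpow_natCast, ← rpow_mul (abs_nonneg _),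
        ← rpow_mul (by positivity), ← rpow_neg (by positivity)]
      congr 1
      push_cast
      ring

lemma ProbabilityTheory.iIndepFun.integrable_finset_prod {Ω ι : Type*} [MeasurableSpace Ω]
    {μ : Measure Ω} {X : ι → Ω → ℝ} (hX : iIndepFun X μ)
    (hmeas : ∀ i, Measurable (X i)) (hint : ∀ i, Integrable (X i) μ) (s : Finset ι) :
    Integrable (fun ω => ∏ i ∈ s, X i ω) μ := by
  classical
  have := hX.isProbabilityMeasure
  induction s using Finset.induction_on with
  | empty => simp
  | insert i s hi ih =>
    have hind := hX.indepFun_finsetProd_of_notMem hmeas hi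
    simp only [prod_insert hi]
    refine ((hind.integrable_mul ?_ (hint i)).congr (ae_of_all _ fun ω => ?_))
    · simpa only [← Finset.prod_fn] using ih
    · simp [mul_comm]

section SumOfSquares

variable {Ω ι : Type*} [MeasurableSpace Ω] {μ : Measure Ω} {Z : ι → Ω → ℝ}

lemma ae_sum_sq_pos (hmeas : ∀ i, Measurable (Z i))
    (hdist : ∀ i, μ.map (Z i) = gaussianReal 0 1) {s : Finset ι} (hs : s.Nonempty) :
    ∀ᵐ ω ∂μ, 0 < ∑ i ∈ s, Z i ω ^ 2 := by
  obtain ⟨i, hi⟩ := hs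
  filter_upwards [ae_ne_of_map_eq_gaussianReal one_ne_zero (hmeas i).aemeasurable (hdist i) 0]
    with ω hω
  exact (by positivity : 0 < Z i ω ^ 2).trans_le (single_le_sum (fun j _ => sq_nonneg (Z j ω)) hi)

lemma integrable_inv_pow_sum_sq (hmeas : ∀ i, Measurable (Z i))
    (hdist : ∀ i, μ.map (Z i) = gaussianReal 0 1) (hindep : iIndepFun Z μ) {s : Finset ι}
    {n : ℕ} (hn : 2 * n < #s) :
    Integrable (fun ω => ((∑ i ∈ s, Z i ω ^ 2) ^ n)⁻¹) μ := by
  have ha : -1 < -(2 * n : ℝ) / #s := by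
    have : (2 * n : ℝ) < #s := by exact_mod_cast hn
    rw [neg_div, neg_lt_neg_iff, div_lt_one (by linarith)]
    exact this
  set a := -(2 * n : ℝ) / #s
  have hint : ∀ i, Integrable (fun ω => |Z i ω| ^ a) μ := fun i =>
    (integrable_map_measure (g := fun x => |x| ^ a)
      (measurable_abs.pow_const a).aestronglyMeasurable (hmeas i).aemeasurable).1
      (by rw [hdist i]; exact integrable_abs_rpow_gaussianReal ha)
  have hprod := (hindep.comp (fun _ x => |x| ^ a) fun _ => by fun_prop).integrable_finset_prod
    (fun i => by fun_prop) hint s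
  refine hprod.mono' (by fun_prop) ?_
  have hne : ∀ᵐ ω ∂μ, ∀ i ∈ s, Z i ω ≠ 0 := (Filter.eventually_all_finset s).2
    fun i _ => ae_ne_of_map_eq_gaussianReal one_ne_zero (hmeas i).aemeasurable (hdist i) 0
  filter_upwards [hne] with ω hω
  rw [Real.norm_of_nonneg (by positivity)]
  exact inv_pow_sum_sq_le_prod_abs_rpow hω n

lemma integrable_sq_div_pow_succ_sum_sq (hmeas : ∀ i, Measurable (Z i))
    (hdist : ∀ i, μ.map (Z i) = gaussianReal 0 1) (hindep : iIndepFun Z μ) {s : Finset ι}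
    {i : ι} (hi : i ∈ s) {n : ℕ} (hn : 2 * n < #s) :
    Integrable (fun ω => Z i ω ^ 2 / (∑ j ∈ s, Z j ω ^ 2) ^ (n + 1)) μ := by
  refine (integrable_inv_pow_sum_sq hmeas hdist hindep hn).mono'
    (Measurable.aestronglyMeasurable (by fun_prop)) (ae_of_all _ fun ω => ?_)
  rw [Real.norm_of_nonneg (by positivity)]
  exact sq_div_pow_succ_le_inv_pow (single_le_sum (fun j _ => sq_nonneg (Z j ω)) hi) n

lemma indepFun_sum_sq_of_notMem (hmeas : ∀ i, Measurable (Z i)) (hindep : iIndepFun Z μ)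
    {s : Finset ι} {i : ι} (hi : i ∉ s) :
    IndepFun (fun ω => ∑ j ∈ s, Z j ω ^ 2) (Z i) μ := by
  have hφ : Measurable fun z : s → ℝ => ∑ j, z j ^ 2 := by fun_prop
  have hψ : Measurable fun z : ({i} : Finset ι) → ℝ => z ⟨i, mem_singleton_self i⟩ :=
    measurable_pi_apply _
  have h := (hindep.indepFun_finset s {i} (disjoint_singleton_right.2 hi) hmeas).comp hφ hψ
  convert h using 1
  · ext ω
    exact (sum_coe_sort s (fun j => Z j ω ^ 2)).symm
  · rfl

lemma integral_sq_div_pow_sum_sq (hmeas : ∀ i, Measurable (Z i))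
    (hdist : ∀ i, μ.map (Z i) = gaussianReal 0 1) (hindep : iIndepFun Z μ) {s : Finset ι}
    {i : ι} (hi : i ∈ s) {n : ℕ} (hn : 2 * (n + 1) < #s) :
    ∫ ω, Z i ω ^ 2 / (∑ j ∈ s, Z j ω ^ 2) ^ (n + 1) ∂μ =
      ∫ ω, ((∑ j ∈ s, Z j ω ^ 2) ^ (n + 1))⁻¹ ∂μ
        - 2 * (n + 1) * ∫ ω, Z i ω ^ 2 / (∑ j ∈ s, Z j ω ^ 2) ^ (n + 2) ∂μ := by
  classical
  have := hindep.isProbabilityMeasure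
  set Y := fun ω => ∑ j ∈ s.erase i, Z j ω ^ 2
  have hS : ∀ ω, ∑ j ∈ s, Z j ω ^ 2 = Z i ω ^ 2 + Y ω := fun ω =>
    (add_sum_erase s _ hi).symm
  have hY : Measurable Y := by fun_prop
  have hYpos : ∀ᵐ y ∂μ.map Y, 0 < y := by
    refine (ae_map_iff hY.aemeasurable measurableSet_Ioi).2 (ae_sum_sq_pos hmeas hdist ?_)
    rw [← card_pos, card_erase_of_mem hi]
    omega
  have hint₀ := integrable_sq_div_pow_succ_sum_sq hmeas hdist hindep hi (n := n) (by omega)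
  have hint₁ :=
    (integrable_sq_div_pow_succ_sum_sq hmeas hdist hindep hi hn).const_mul (2 * (n + 1))
  have hinv := integrable_inv_pow_sum_sq hmeas hdist hindep hn
  have hf' : ∀ ω, ((∑ j ∈ s, Z j ω ^ 2) ^ (n + 1))⁻¹
      - 2 * (n + 1) * (Z i ω ^ 2 / (∑ j ∈ s, Z j ω ^ 2) ^ (n + 1 + 1))
      = 1 / (Z i ω ^ 2 + Y ω) ^ (n + 1)
        - 2 * ↑(n + 1) * Z i ω ^ 2 / (Z i ω ^ 2 + Y ω) ^ (n + 2) := by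
    intro ω
    rw [hS]
    push_cast
    ring
  have hstein := integral_sub_mul_comp_eq_integral_deriv_of_indepFun (hmeas i) hY (hdist i)
    (indepFun_sum_sq_of_notMem hmeas hindep (notMem_erase i s))
    (f := fun c w => w / (w ^ 2 + c) ^ (n + 1))
    (f' := fun c w => 1 / (w ^ 2 + c) ^ (n + 1) - 2 * ↑(n + 1) * w ^ 2 / (w ^ 2 + c) ^ (n + 2))
    (by fun_prop) (by fun_prop)
    (by filter_upwards [hYpos] with y hy x using
      hasDerivAt_div_sq_add_pow y (n + 1) (by positivity))
    (by filter_upwards [hYpos] with y hy using ⟨_, fun x => abs_div_sq_add_pow_succ_le hy n x⟩)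
    (hint₀.congr (ae_of_all _ fun ω => by simp only [hS]; ring))
    ((hinv.sub hint₁).congr (ae_of_all _ fun ω => hf' ω))
  rw [NNReal.coe_one, one_mul] at hstein
  calc ∫ ω, Z i ω ^ 2 / (∑ j ∈ s, Z j ω ^ 2) ^ (n + 1) ∂μ
      = ∫ ω, (Z i ω - 0) * (Z i ω / (Z i ω ^ 2 + Y ω) ^ (n + 1)) ∂μ := by
        simp only [hS]; ring_nf
    _ = _ := hstein
    _ = _ := by
        simp only [← hf']
        rw [integral_sub hinv hint₁, integral_const_mul]

lemma sum_integral_sq_div_pow_sum_sq (hmeas : ∀ i, Measurable (Z i))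
    (hdist : ∀ i, μ.map (Z i) = gaussianReal 0 1) (hindep : iIndepFun Z μ) {s : Finset ι}
    {n : ℕ} (hn : 2 * n < #s) :
    ∑ i ∈ s, ∫ ω, Z i ω ^ 2 / (∑ j ∈ s, Z j ω ^ 2) ^ (n + 1) ∂μ =
      ∫ ω, ((∑ j ∈ s, Z j ω ^ 2) ^ n)⁻¹ ∂μ := by
  rw [← integral_finsetSum s fun i hi =>
    integrable_sq_div_pow_succ_sum_sq hmeas hdist hindep hi hn]
  refine integral_congr_ae ?_
  filter_upwards [ae_sum_sq_pos hmeas hdist (s := s) (card_pos.1 (by omega))] with ω hω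
  rw [← sum_div, pow_succ, div_mul_cancel_right₀ hω.ne']

lemma card_sub_mul_integral_inv_pow_sum_sq (hmeas : ∀ i, Measurable (Z i))
    (hdist : ∀ i, μ.map (Z i) = gaussianReal 0 1) (hindep : iIndepFun Z μ) {s : Finset ι}
    {n : ℕ} (hn : 2 * (n + 1) < #s) :
    (#s - 2 * (n + 1) : ℝ) * ∫ ω, ((∑ i ∈ s, Z i ω ^ 2) ^ (n + 1))⁻¹ ∂μ =
      ∫ ω, ((∑ i ∈ s, Z i ω ^ 2) ^ n)⁻¹ ∂μ := by
  rw [← sum_integral_sq_div_pow_sum_sq hmeas hdist hindep (n := n) (by omega),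
    sum_congr rfl fun i hi => integral_sq_div_pow_sum_sq hmeas hdist hindep hi hn,
    sum_sub_distrib, ← mul_sum, sum_integral_sq_div_pow_sum_sq hmeas hdist hindep hn, sum_const,
    nsmul_eq_mul]
  ring

lemma integral_inv_sum_sq (hmeas : ∀ i, Measurable (Z i))
    (hdist : ∀ i, μ.map (Z i) = gaussianReal 0 1) (hindep : iIndepFun Z μ) {s : Finset ι}
    (hs : 2 < #s) :
    ∫ ω, (∑ i ∈ s, Z i ω ^ 2)⁻¹ ∂μ = (#s - 2 : ℝ)⁻¹ := by
  have := hindep.isProbabilityMeasure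
  have h := card_sub_mul_integral_inv_pow_sum_sq hmeas hdist hindep (n := 0) (s := s) (by omega)
  simp only [Nat.cast_zero, zero_add, mul_one, pow_one, pow_zero, inv_one, integral_const,
    probReal_univ, smul_eq_mul] at h
  exact eq_inv_of_mul_eq_one_right h

lemma integral_inv_sq_sum_sq (hmeas : ∀ i, Measurable (Z i))
    (hdist : ∀ i, μ.map (Z i) = gaussianReal 0 1) (hindep : iIndepFun Z μ) {s : Finset ι}
    (hs : 4 < #s) :
    ∫ ω, ((∑ i ∈ s, Z i ω ^ 2) ^ 2)⁻¹ ∂μ = ((#s - 2) * (#s - 4) : ℝ)⁻¹ := by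
  have h := card_sub_mul_integral_inv_pow_sum_sq hmeas hdist hindep (n := 1) (s := s) (by omega)
  have h4 : (4 : ℝ) < #s := by exact_mod_cast hs
  norm_num only [pow_one] at h
  rw [integral_inv_sum_sq hmeas hdist hindep (by omega)] at h
  rw [mul_inv_rev, ← h, inv_mul_cancel_left₀ (by linarith)]

end SumOfSquares

lemma integral_sq_sub_sq_integral_of_ae_eq_const_add_mul {Ω : Type*} [MeasurableSpace Ω]
    {μ : Measure Ω} [IsProbabilityMeasure μ] {T Y : Ω → ℝ} {a b : ℝ}
    (hT : T =ᵐ[μ] fun ω => a + b * Y ω) (hY : MemLp Y 2 μ) :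
    ∫ ω, T ω ^ 2 ∂μ - (∫ ω, T ω ∂μ) ^ 2 =
      b ^ 2 * (∫ ω, Y ω ^ 2 ∂μ - (∫ ω, Y ω ∂μ) ^ 2) := by
  have hbY : MemLp (fun ω => a + b * Y ω) 2 μ := (memLp_const a).add (hY.const_mul b)
  have hvar := variance_eq_sub (hbY.ae_eq hT.symm)
  rw [variance_congr hT, variance_const_add (hY.const_mul b).aestronglyMeasurable,
    variance_const_mul, variance_eq_sub hY] at hvar
  simpa only [Pi.pow_apply] using hvar.symm

lemma abs_cube_div_sub_one_sub_eight_div_le {x : ℝ} (hx : 12 ≤ x) :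
    |x ^ 3 / ((x - 2) ^ 2 * (x - 4)) - 1 - 8 / x| ≤ 352 * x ^ (-(3 : ℝ) / 2) := by
  have hx0 : 0 < x := by linarith
  have h2 : 0 < x - 2 := by linarith
  have h4 : 0 < x - 4 := by linarith
  have hD : 0 < x * (x - 2) ^ 2 * (x - 4) := by positivity
  have key : x ^ 3 / ((x - 2) ^ 2 * (x - 4)) - 1 - 8 / x
      = (44 * x ^ 2 - 144 * x + 128) / (x * (x - 2) ^ 2 * (x - 4)) := by
    field_simp [h2.ne', h4.ne']
    ring
  have hD8 : x ^ 4 / 8 ≤ x * (x - 2) ^ 2 * (x - 4) := by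
    calc x ^ 4 / 8 = x * (x / 2) ^ 2 * (x / 2) := by ring
      _ ≤ x * (x - 2) ^ 2 * (x - 4) := by gcongr <;> linarith
  rw [key, abs_of_pos (div_pos (by nlinarith) hD)]
  calc (44 * x ^ 2 - 144 * x + 128) / (x * (x - 2) ^ 2 * (x - 4))
      ≤ 44 * x ^ 2 / (x ^ 4 / 8) :=
        div_le_div₀ (by positivity) (by nlinarith) (by positivity) hD8
    _ = 352 * x ^ (-2 : ℝ) := by
      rw [rpow_neg hx0.le, rpow_two]
      field_simp
      ring
    _ ≤ 352 * x ^ (-(3 : ℝ) / 2) := by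
      gcongr
      · linarith
      · norm_num

theorem integral_sq_sub_sq_integral_studentized {Ω : Type*} [MeasurableSpace Ω]
    {μ : Measure Ω} {Z : ℕ → Ω → ℝ} (hmeas : ∀ i, Measurable (Z i))
    (hdist : ∀ i, μ.map (Z i) = gaussianReal 0 1) (hindep : iIndepFun Z μ) {k : ℕ}
    (hk : 4 < k) {T : Ω → ℝ}
    (hT : ∀ᵐ ω ∂μ, T ω = √k * (1 / k * ∑ i ∈ range k, Z i ω ^ 2 - 1)
      / (√2 * (1 / k * ∑ i ∈ range k, Z i ω ^ 2))) :
    ∫ ω, T ω ^ 2 ∂μ - (∫ ω, T ω ∂μ) ^ 2 = k ^ 3 / ((k - 2) ^ 2 * (k - 4)) := by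
  have := hindep.isProbabilityMeasure
  have hk' : (4 : ℝ) < k := by exact_mod_cast hk
  have hT' : T =ᵐ[μ]
      fun ω => √k / √2 + -(√k / √2 * k) * (∑ i ∈ range k, Z i ω ^ 2)⁻¹ := by
    filter_upwards [hT, ae_sum_sq_pos hmeas hdist (s := range k)
      (nonempty_range_iff.2 (by omega))] with ω hω hS
    rw [hω]
    field_simp
    ring
  have hY : MemLp (fun ω => (∑ i ∈ range k, Z i ω ^ 2)⁻¹) 2 μ :=
    (memLp_two_iff_integrable_sq (by fun_prop)).2 (by
      simpa only [inv_pow] using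
        integrable_inv_pow_sum_sq hmeas hdist hindep (n := 2) (s := range k) (by simp; omega))
  rw [integral_sq_sub_sq_integral_of_ae_eq_const_add_mul hT' hY]
  simp only [inv_pow]
  rw [integral_inv_sq_sum_sq hmeas hdist hindep (by simpa using hk),
    integral_inv_sum_sq hmeas hdist hindep (by simp; omega), card_range]
  have h2 : (k : ℝ) - 2 ≠ 0 := by linarith
  have h4 : (k : ℝ) - 4 ≠ 0 := by linarith
  field_simp
  rw [sq_sqrt (by positivity), sq_sqrt (by positivity)]
  ring

theorem second_cumulant_of_studentized_statistic_general
    {Ω : Type*} [MeasurableSpace Ω] (μ : Measure Ω)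
    (Z : ℕ → Ω → ℝ)
    (hmeas : ∀ i, Measurable (Z i))
    (hdist : ∀ i, Measure.map (Z i) μ = gaussianReal 0 1)
    (hindep : iIndepFun Z μ)
    (V T : ℕ → Ω → ℝ)
    (hV : ∀ k, V k = fun ω => (1 / (k : ℝ)) * ∑ i ∈ Finset.range k, (Z i ω) ^ 2)
    (hT : ∀ k, T k = fun ω => Real.sqrt k * (V k ω - 1) / (Real.sqrt 2 * V k ω)) :
    ∃ C > (0 : ℝ), ∃ K : ℕ, ∀ k : ℕ, K ≤ k →
      |(∫ ω, (T k ω) ^ 2 ∂μ) - (∫ ω, T k ω ∂μ) ^ 2 - 1 - 8 / (k : ℝ)|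
        ≤ C * (k : ℝ) ^ (-(3 : ℝ) / 2) := by
  refine ⟨352, by norm_num, 12, fun k hk => ?_⟩
  rw [integral_sq_sub_sq_integral_studentized hmeas hdist hindep (k := k) (by omega)
    (ae_of_all _ fun ω => by simp only [hT, hV])]
  exact abs_cube_div_sub_one_sub_eight_div_le (by exact_mod_cast hk)

/-- The variance (second cumulant) of the studentized statistic
`T_k = √k (V_k − 1)/(√2 V_k)` satisfies `Var(T_k) = 1 + 8/k + O(k^{−3/2})` as `k → ∞`. -/
theorem second_cumulant_of_studentized_statistic
    {Ω : Type*} [MeasurableSpace Ω] (μ : Measure Ω) [IsProbabilityMeasure μ]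
    (Z : ℕ → Ω → ℝ)
    (hmeas : ∀ i, Measurable (Z i))
    (hdist : ∀ i, Measure.map (Z i) μ = gaussianReal 0 1)
    (hindep : iIndepFun Z μ)
    (V T : ℕ → Ω → ℝ)
    (hV : ∀ k, V k = fun ω => (1 / (k : ℝ)) * ∑ i ∈ Finset.range k, (Z i ω) ^ 2)
    (hT : ∀ k, T k = fun ω => Real.sqrt k * (V k ω - 1) / (Real.sqrt 2 * V k ω)) :
    ∃ C > (0 : ℝ), ∃ K : ℕ, ∀ k : ℕ, K ≤ k →
      |(∫ ω, (T k ω) ^ 2 ∂μ) - (∫ ω, T k ω ∂μ) ^ 2 - 1 - 8 / (k : ℝ)|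
        ≤ C * (k : ℝ) ^ (-(3 : ℝ) / 2) :=
  second_cumulant_of_studentized_statistic_general μ Z hmeas hdist hindep V T hV hT
end

section
/- Let α ∈ (0,1) and let z be the α-quantile of the standard normal distribution, i.e. Φ(z) = α. Suppose (T_k)_{k≥1} is a sequence of real random variables such that sup_{x∈ℝ} |P(T_k ≤ x) − Φ(x) − q_1(x)φ(x)/√k − q_2(x)φ(x)/k| = O(1/k) as k → ∞, where q_1(x) = √2 + (2√2/3)(x² − 1) and q_2(x) = −5x − (23/6)(x³ − 3x) + (4/9)(x⁵ − 10x³ + 15x). Then the Edgeworth-corrected one-sided coverage satisfies P(T_k ≥ z − q_1(z)/√k) = (1 − α) + O(1/k) as k → ∞. -/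
open MeasureTheory ProbabilityTheory Real Filter

/-- The cumulative distribution function `Φ` of the standard normal distribution. -/
noncomputable def stdNormalCDF (x : ℝ) : ℝ :=
  ((gaussianReal 0 1) (Set.Iic x)).toReal

/-- The density `φ` of the standard normal distribution. -/
noncomputable def stdNormalPDF (x : ℝ) : ℝ :=
  gaussianPDFReal 0 1 x

/-!
Write `δ = 1/√k` and `E_δ(x) = Φ(x) + δ q₁(x)φ(x) + δ² q₂(x)φ(x)`. Since `E_δ` is continuous,
the uniform bound `|P(T_k ≤ x) - E_δ(x)| ≤ C/k` also controls `P(T_k < x)`, hence the coverage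
`P(T_k ≥ x) = 1 - P(T_k < x)` at `x = z - δ q₁(z)`. It remains to see that
`E_δ(z - δ q₁(z)) = Φ(z) + O(δ²)`: expanding `Φ` to second order around `z`, the first-order
term `-δ q₁(z) φ(z)` cancels the Edgeworth term `δ q₁(z) φ(z)`, while moving the argument of
`q₁ φ` by `O(δ)` costs `O(δ²)` and the `δ²` term is bounded.
-/

open Asymptotics Topology

section Probability

variable {Ω : Type*} [MeasurableSpace Ω] {μ : Measure Ω} {X : Ω → ℝ} {F : ℝ → ℝ} {x ε : ℝ}

theorem abs_measureReal_lt_sub_le [IsFiniteMeasure μ] (hF : ContinuousWithinAt F (Set.Iio x) x)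
    (h : ∀ y, |μ.real {ω | X ω ≤ y} - F y| ≤ ε) :
    |μ.real {ω | X ω < x} - F x| ≤ ε := by
  have hupper : μ.real {ω | X ω < x} ≤ F x + ε := calc
    _ ≤ μ.real {ω | X ω ≤ x} := measureReal_mono fun ω (hω : X ω < x) => hω.le
    _ ≤ F x + ε := by linarith [(abs_le.1 (h x)).2]
  have hlower : F x - ε ≤ μ.real {ω | X ω < x} := by
    refine le_of_tendsto (hF.tendsto.sub_const ε) ?_
    filter_upwards [self_mem_nhdsWithin] with y (hy : y < x)
    calc F y - ε ≤ μ.real {ω | X ω ≤ y} := by linarith [(abs_le.1 (h y)).1]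
      _ ≤ μ.real {ω | X ω < x} := measureReal_mono fun ω (hω : X ω ≤ y) => hω.trans_lt hy
  exact abs_le.2 ⟨by linarith, by linarith⟩

theorem abs_measureReal_ge_sub_le [IsProbabilityMeasure μ] (hX : Measurable X)
    (hF : ContinuousWithinAt F (Set.Iio x) x) (h : ∀ y, |μ.real {ω | X ω ≤ y} - F y| ≤ ε) :
    |μ.real {ω | x ≤ X ω} - (1 - F x)| ≤ ε := by
  have hcompl : {ω | x ≤ X ω} = {ω | X ω < x}ᶜ := by ext; simp
  rw [hcompl, probReal_compl_eq_one_sub (measurableSet_lt hX measurable_const), ← abs_neg]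
  convert abs_measureReal_lt_sub_le hF h using 2
  ring

end Probability

theorem isBigO_sub_sub_smul_sq {E : Type*} [NormedAddCommGroup E] [NormedSpace ℝ E]
    {f f' : ℝ → E} {x₀ : ℝ} (hf : ∀ x, HasDerivAt f (f' x) x)
    (hf' : (f' · - f' x₀) =O[𝓝 x₀] (· - x₀)) :
    (fun x => f x - f x₀ - (x - x₀) • f' x₀) =O[𝓝 x₀] fun x => (x - x₀) ^ 2 := by
  obtain ⟨c, hc, hcf⟩ := hf'.exists_pos
  obtain ⟨r, hr, hball⟩ := Metric.eventually_nhds_iff_ball.1 hcf.bound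
  refine IsBigO.of_bound c ?_
  filter_upwards [Metric.ball_mem_nhds x₀ hr] with x hx
  have hderiv (y : ℝ) : HasDerivAt (fun y => f y - y • f' x₀) (f' y - f' x₀) y := by
    simpa using (hf y).fun_sub ((hasDerivAt_id y).smul_const (f' x₀))
  have hbound (y : ℝ) (hy : y ∈ Metric.closedBall x₀ (dist x x₀)) :
      ‖f' y - f' x₀‖ ≤ c * dist x x₀ := calc
    _ ≤ c * ‖y - x₀‖ := hball y (Metric.closedBall_subset_ball hx hy)
    _ ≤ c * dist x x₀ := by gcongr; exact hy
  have hmvt := (convex_closedBall x₀ (dist x x₀)).norm_image_sub_le_of_norm_hasDerivWithin_le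
    (fun y _ => (hderiv y).hasDerivWithinAt) hbound
    (Metric.mem_closedBall_self dist_nonneg) (Metric.mem_closedBall.2 le_rfl)
  calc ‖f x - f x₀ - (x - x₀) • f' x₀‖
      = ‖(f x - x • f' x₀) - (f x₀ - x₀ • f' x₀)‖ := by rw [sub_smul]; congr 1; abel
    _ ≤ c * dist x x₀ * ‖x - x₀‖ := hmvt
    _ = c * ‖(x - x₀) ^ 2‖ := by rw [Real.dist_eq, norm_pow, Real.norm_eq_abs]; ring

def edgeworth (Φ φ q₁ q₂ : ℝ → ℝ) (δ x : ℝ) : ℝ :=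
  Φ x + q₁ x * φ x * δ + q₂ x * φ x * δ ^ 2

theorem continuous_edgeworth {Φ φ q₁ q₂ : ℝ → ℝ} (hΦ : Continuous Φ) (hφ : Continuous φ)
    (hq₁ : Continuous q₁) (hq₂ : Continuous q₂) (δ : ℝ) :
    Continuous (edgeworth Φ φ q₁ q₂ δ) := by
  unfold edgeworth
  fun_prop

theorem edgeworth_inv_sqrt_natCast (Φ φ q₁ q₂ : ℝ → ℝ) (k : ℕ) (x : ℝ) :
    edgeworth Φ φ q₁ q₂ (√k)⁻¹ x = Φ x + q₁ x * φ x / √k + q₂ x * φ x / k := by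
  simp [edgeworth, div_eq_mul_inv, inv_pow]

theorem edgeworth_sub_isBigO_sq {Φ φ q₁ q₂ : ℝ → ℝ} {z : ℝ}
    (hΦ : ∀ x, HasDerivAt Φ (φ x) x) (hφ : DifferentiableAt ℝ φ z)
    (hq₁ : DifferentiableAt ℝ q₁ z) (hq₂ : ContinuousAt q₂ z) :
    (fun δ => edgeworth Φ φ q₁ q₂ δ (z - δ * q₁ z) - Φ z) =O[𝓝 0] fun δ => δ ^ 2 := by
  set y : ℝ → ℝ := fun δ => z - δ * q₁ z
  have hy : Tendsto y (𝓝 0) (𝓝 z) :=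
    (show Continuous y by fun_prop).tendsto' 0 z (by simp [y])
  have hsq : (fun δ => (y δ - z) ^ 2) =O[𝓝 0] fun δ => δ ^ 2 :=
    (isBigO_const_mul_self (q₁ z ^ 2) _ _).congr_left fun δ => by simp only [y]; ring
  have hlin : (fun δ => y δ - z) =O[𝓝 0] fun δ => δ :=
    (isBigO_const_mul_self (-q₁ z) _ _).congr_left fun δ => by simp only [y]; ring
  have hΦy := ((isBigO_sub_sub_smul_sq hΦ hφ.hasDerivAt.isBigO_sub).comp_tendsto hy).trans hsq
  have hq₁φy : (fun δ => ((q₁ * φ) (y δ) - (q₁ * φ) z) * δ) =O[𝓝 0] fun δ => δ ^ 2 :=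
    ((((hq₁.mul hφ).hasDerivAt.isBigO_sub.comp_tendsto hy).trans hlin).mul
      (isBigO_refl _ _)).congr_right fun δ => (sq δ).symm
  have hq₂φy : (fun δ => δ ^ 2 * (q₂ * φ) (y δ)) =O[𝓝 0] fun δ => δ ^ 2 :=
    ((isBigO_refl _ _).mul (((hq₂.mul hφ.continuousAt).tendsto.comp hy).isBigO_one ℝ)).congr_right
      fun δ => mul_one _
  refine ((hΦy.add hq₁φy).add hq₂φy).congr_left fun δ => ?_
  simp only [Function.comp, edgeworth, y, smul_eq_mul, Pi.mul_apply]
  ring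

theorem stdNormalPDF_eq : stdNormalPDF = fun x => (√(2 * π))⁻¹ * rexp (-x ^ 2 / 2) := by
  ext x
  simp [stdNormalPDF, gaussianPDFReal]

theorem differentiable_stdNormalPDF : Differentiable ℝ stdNormalPDF := by
  rw [stdNormalPDF_eq]
  fun_prop

theorem stdNormalCDF_eq_integral (x : ℝ) : stdNormalCDF x = ∫ t in Set.Iic x, stdNormalPDF t := by
  rw [stdNormalCDF, gaussianReal_apply_eq_integral 0 one_ne_zero, ENNReal.toReal_ofReal]
  · rfl
  · exact setIntegral_nonneg measurableSet_Iic fun t _ => gaussianPDFReal_nonneg 0 1 t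

theorem hasDerivAt_stdNormalCDF (x : ℝ) : HasDerivAt stdNormalCDF (stdNormalPDF x) x := by
  have hint : Integrable stdNormalPDF := integrable_gaussianPDFReal 0 1
  have hcont : Continuous stdNormalPDF := differentiable_stdNormalPDF.continuous
  have hcdf (y : ℝ) : stdNormalCDF y = stdNormalCDF 0 + ∫ t in (0 : ℝ)..y, stdNormalPDF t := by
    rw [stdNormalCDF_eq_integral, stdNormalCDF_eq_integral,
      ← intervalIntegral.integral_Iic_sub_Iic hint.integrableOn hint.integrableOn]
    ring
  rw [funext hcdf]
  exact (intervalIntegral.integral_hasDerivAt_right hint.intervalIntegrable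
    hcont.aestronglyMeasurable.stronglyMeasurableAtFilter hcont.continuousAt).const_add _

theorem continuous_stdNormalCDF : Continuous stdNormalCDF :=
  continuous_iff_continuousAt.2 fun x => (hasDerivAt_stdNormalCDF x).continuousAt

theorem corrected_one_sided_coverage_general
    {Ω : Type*} [MeasurableSpace Ω] (μ : Measure Ω) [IsProbabilityMeasure μ]
    (T : ℕ → Ω → ℝ) (hmeas : ∀ k, Measurable (T k))
    (q₁ q₂ : ℝ → ℝ)
    (hq₁ : ∀ y, q₁ y = Real.sqrt 2 + (2 * Real.sqrt 2 / 3) * (y ^ 2 - 1))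
    (hq₂ : ∀ y, q₂ y = -5 * y - (23 / 6) * (y ^ 3 - 3 * y)
        + (4 / 9) * (y ^ 5 - 10 * y ^ 3 + 15 * y))
    (hEdge : ∃ C > (0 : ℝ), ∃ K : ℕ, ∀ k : ℕ, K ≤ k → ∀ x : ℝ,
        |(μ {ω | T k ω ≤ x}).toReal
            - (stdNormalCDF x + q₁ x * stdNormalPDF x / Real.sqrt k
                + q₂ x * stdNormalPDF x / (k : ℝ))| ≤ C / (k : ℝ))
    (α : ℝ)
    (z : ℝ) (hz : stdNormalCDF z = α) :
    (fun k : ℕ => (μ {ω | z - q₁ z / Real.sqrt k ≤ T k ω}).toReal - (1 - α))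
      =O[atTop] fun k : ℕ => 1 / (k : ℝ) := by
  obtain ⟨C, -, K, hK⟩ := hEdge
  have hq₁d : Differentiable ℝ q₁ := funext hq₁ ▸ by fun_prop
  have hq₂c : Continuous q₂ := funext hq₂ ▸ by fun_prop
  have hδ : Tendsto (fun k : ℕ => (√k)⁻¹) atTop (𝓝 0) :=
    tendsto_inv_atTop_zero.comp (tendsto_sqrt_atTop.comp tendsto_natCast_atTop_atTop)
  have hcoverage : ∀ k ≥ K, |μ.real {ω | z - (√k)⁻¹ * q₁ z ≤ T k ω}
      - (1 - edgeworth stdNormalCDF stdNormalPDF q₁ q₂ (√k)⁻¹ (z - (√k)⁻¹ * q₁ z))|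
      ≤ C * ‖1 / (k : ℝ)‖ := fun k hk => by
    rw [norm_div, norm_one, RCLike.norm_natCast, ← div_eq_mul_one_div]
    refine abs_measureReal_ge_sub_le (hmeas k) (continuous_edgeworth continuous_stdNormalCDF
      differentiable_stdNormalPDF.continuous hq₁d.continuous hq₂c _).continuousWithinAt
      fun x => ?_
    rw [edgeworth_inv_sqrt_natCast]
    exact hK k hk x
  have hexpansion := (edgeworth_sub_isBigO_sq (z := z) hasDerivAt_stdNormalCDF
    differentiable_stdNormalPDF.differentiableAt hq₁d.differentiableAt
    hq₂c.continuousAt).comp_tendsto hδ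
  refine ((IsBigO.of_bound C (eventually_atTop.2 ⟨K, hcoverage⟩)).sub
    (hexpansion.congr_right fun k => ?_)).congr_left fun k => ?_
  · simp [inv_pow]
  · simp only [Function.comp, hz, ← div_eq_inv_mul, measureReal_def]
    ring

/-- If `Φ(z) = α` and `(T_k)` admits a uniform second-order Edgeworth
expansion with remainder `O(1/k)`, then the Edgeworth-corrected one-sided coverage satisfies
`P(T_k ≥ z − q₁(z)/√k) = (1 − α) + O(1/k)` as `k → ∞`. -/
theorem corrected_one_sided_coverage
    {Ω : Type*} [MeasurableSpace Ω] (μ : Measure Ω) [IsProbabilityMeasure μ]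
    (T : ℕ → Ω → ℝ) (hmeas : ∀ k, Measurable (T k))
    (q₁ q₂ : ℝ → ℝ)
    (hq₁ : ∀ y, q₁ y = Real.sqrt 2 + (2 * Real.sqrt 2 / 3) * (y ^ 2 - 1))
    (hq₂ : ∀ y, q₂ y = -5 * y - (23 / 6) * (y ^ 3 - 3 * y)
        + (4 / 9) * (y ^ 5 - 10 * y ^ 3 + 15 * y))
    (hEdge : ∃ C > (0 : ℝ), ∃ K : ℕ, ∀ k : ℕ, K ≤ k → ∀ x : ℝ,
        |(μ {ω | T k ω ≤ x}).toReal
            - (stdNormalCDF x + q₁ x * stdNormalPDF x / Real.sqrt k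
                + q₂ x * stdNormalPDF x / (k : ℝ))| ≤ C / (k : ℝ))
    (α : ℝ) (hα : α ∈ Set.Ioo (0 : ℝ) 1)
    (z : ℝ) (hz : stdNormalCDF z = α) :
    (fun k : ℕ => (μ {ω | z - q₁ z / Real.sqrt k ≤ T k ω}).toReal - (1 - α))
      =O[atTop] fun k : ℕ => 1 / (k : ℝ) :=
  corrected_one_sided_coverage_general μ T hmeas q₁ q₂ hq₁ hq₂ hEdge α z hz
end
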